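/- Let S = K[x_{12}, x_{23}, …, x_{n−1,n}, y_1, …, y_{r+1}] with n = 2r+1, and let J = ⟨ x_{i,i+1} y_{(i+1)/2} − x_{i+1,i+2} y_{(i+3)/2} : i odd, 1 ≤ i ≤ 2r−1 ⟩. Then the r generators of J form a regular sequence in S; in particular J is a complete intersection of quadrics of height r. -/
import Mathlib


open MvPolynomial


lemma lemL1 {R : Type*} [CommRing R] (I : Ideal R) (q : Polynomial R)
    (h : Polynomial.X * q ∈ I.map (Polynomial.C : R →+* Polynomial R)) : q ∈ I.map (Polynomial.C : R →+* Polynomial R) := by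
  rw [Ideal.mem_map_C_iff] at h ⊢
  intro n
  simpa [Polynomial.coeff_X_mul] using h (n + 1)

lemma lemL2 {R : Type*} [CommRing R] (I : Ideal R) (c d : R)
    (hc : ∀ a, c * a ∈ I → a ∈ I) (q : Polynomial R)
    (h : (Polynomial.C c * Polynomial.X + Polynomial.C d) * q ∈ I.map (Polynomial.C : R →+* Polynomial R)) :
    q ∈ I.map (Polynomial.C : R →+* Polynomial R) := by
  rw [Ideal.mem_map_C_iff] at h ⊢
  have key : ∀ j n, q.natDegree < n + j → q.coeff n ∈ I := by
    intro j
    induction j with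
    | zero =>
      intro n hn
      rw [Polynomial.coeff_eq_zero_of_natDegree_lt (by omega)]
      exact I.zero_mem
    | succ j ih =>
      intro n hn
      rcases lt_or_ge q.natDegree n with h' | h'
      · rw [Polynomial.coeff_eq_zero_of_natDegree_lt h']; exact I.zero_mem
      · have h1 : q.coeff (n + 1) ∈ I := ih (n + 1) (by omega)
        have h2 := h (n + 1)
        have h3 : ((Polynomial.C c * Polynomial.X + Polynomial.C d) * q).coeff (n + 1)
            = c * q.coeff n + d * q.coeff (n + 1) := by
          rw [add_mul, mul_assoc, Polynomial.coeff_add, Polynomial.coeff_C_mul,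
            Polynomial.coeff_C_mul, Polynomial.coeff_X_mul]
        rw [h3] at h2
        have h4 : c * q.coeff n ∈ I := by
          have := I.sub_mem h2 (I.mul_mem_left d h1)
          simpa using this
        exact hc _ h4
  intro n; exact key (q.natDegree + 1) n (by omega)

lemma mem_span_image_iff' {R S : Type*} [CommRing R] [CommRing S] (e : R ≃+* S)
    (s : Set R) (x : R) : x ∈ Ideal.span s ↔ e x ∈ Ideal.span (⇑e '' s) := by
  constructor
  · intro h
    have := Ideal.mem_map_of_mem (e : R →+* S) h
    rwa [Ideal.map_span] at this
  · intro h
    have := Ideal.mem_map_of_mem (e.symm : S →+* R) h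
    rw [Ideal.map_span, ← Set.image_comp] at this
    simpa [Function.comp_def] using this

lemma optionEquivLeft_rename_some {K τ : Type*} [CommRing K] (p : MvPolynomial τ K) :
    optionEquivLeft K τ (rename some p) = Polynomial.C p := by
  induction p using MvPolynomial.induction_on with
  | C a => rw [rename_C, optionEquivLeft_C]
  | add p q hp hq => rw [map_add, map_add, hp, hq, map_add]
  | mul_X p i hp => rw [map_mul, map_mul, hp, rename_X, optionEquivLeft_X_some, map_mul]

lemma lemA {K τ : Type*} [CommRing K] (s : Set (MvPolynomial τ K))
    (a : MvPolynomial (Option τ) K)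
    (h : X none * a ∈ Ideal.span (⇑(rename some) '' s)) :
    a ∈ Ideal.span (⇑(rename some) '' s) := by
  set e := (optionEquivLeft K τ).toRingEquiv with he
  have himg : ⇑e '' (⇑(rename some) '' s) = ⇑(Polynomial.C : MvPolynomial τ K →+* _) '' s := by
    rw [← Set.image_comp]
    exact Set.image_congr (fun p _ => optionEquivLeft_rename_some p)
  rw [mem_span_image_iff' e] at h ⊢
  rw [himg, ← Ideal.map_span] at h ⊢
  rw [map_mul] at h
  have hX : e (X none) = Polynomial.X := optionEquivLeft_X_none K τ
  rw [hX] at h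
  exact lemL1 _ _ h

lemma lemMaster {K τ : Type*} [CommRing K] (s : Set (MvPolynomial τ K))
    (d : MvPolynomial (Option τ) K) (g : MvPolynomial (Option (Option τ)) K)
    (h : (rename some d - X none * X (some none)) * g ∈
      Ideal.span (⇑(rename some) '' (⇑(rename some) '' s))) :
    g ∈ Ideal.span (⇑(rename some) '' (⇑(rename some) '' s)) := by
  set e := (optionEquivLeft K (Option τ)).toRingEquiv with he
  have himg : ⇑e '' (⇑(rename some) '' (⇑(rename some) '' s))
      = ⇑(Polynomial.C : MvPolynomial (Option τ) K →+* _) '' (⇑(rename some) '' s) := by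
    rw [← Set.image_comp]
    exact Set.image_congr (fun p _ => optionEquivLeft_rename_some p)
  rw [mem_span_image_iff' e] at h ⊢
  rw [himg, ← Ideal.map_span] at h ⊢
  rw [map_mul, map_sub, map_mul] at h
  have h1 : e (rename some d) = Polynomial.C d := optionEquivLeft_rename_some d
  have h2 : e (X (some none)) = Polynomial.C (X none) := optionEquivLeft_X_some K (Option τ) none
  have h3 : e (X none) = Polynomial.X := optionEquivLeft_X_none K (Option τ)
  rw [h1, h2, h3] at h
  have hshape : Polynomial.C d - Polynomial.X * Polynomial.C (X none)
      = Polynomial.C (-(X none : MvPolynomial (Option τ) K)) * Polynomial.X + Polynomial.C d := by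
    rw [map_neg]; ring
  rw [hshape] at h
  refine lemL2 _ (-(X none : MvPolynomial (Option τ) K)) d ?_ _ h
  intro a ha
  have : X none * a ∈ Ideal.span (⇑(rename some) '' s) := by
    have := (Ideal.span (⇑(rename some) '' s)).neg_mem ha
    simpa using this
  exact lemA s a this

def remove2 {σ : Type*} [DecidableEq σ] (v1 v2 : σ) (h : v1 ≠ v2) :
    σ ≃ Option (Option {w : σ // w ≠ v1 ∧ w ≠ v2}) where
  toFun w := if h1 : w = v1 then none else if h2 : w = v2 then some none
    else some (some ⟨w, h1, h2⟩)
  invFun o := o.elim v1 (fun o' => o'.elim v2 Subtype.val)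
  left_inv w := by
    by_cases h1 : w = v1
    · simp [h1]
    · by_cases h2 : w = v2 <;> simp [h1, h2, h.symm]
  right_inv o := by
    rcases o with _ | (_ | ⟨w, hw1, hw2⟩)
    · simp
    · simp [h.symm]
    · simp [hw1, hw2]

@[simp] lemma remove2_fst {σ : Type*} [DecidableEq σ] (v1 v2 : σ) (h : v1 ≠ v2) :
    remove2 v1 v2 h v1 = none := by simp [remove2]

@[simp] lemma remove2_snd {σ : Type*} [DecidableEq σ] (v1 v2 : σ) (h : v1 ≠ v2) :
    remove2 v1 v2 h v2 = some none := by simp [remove2, h.symm]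

lemma remove2_other {σ : Type*} [DecidableEq σ] (v1 v2 : σ) (h : v1 ≠ v2)
    (w : σ) (h1 : w ≠ v1) (h2 : w ≠ v2) :
    remove2 v1 v2 h w = some (some ⟨w, h1, h2⟩) := by simp [remove2, h1, h2]

lemma isSMulRegular_quot {R : Type*} [CommRing R] (I : Ideal R) (f : R)
    (h : ∀ g, f * g ∈ I → g ∈ I) :
    IsSMulRegular (R ⧸ (I • ⊤ : Submodule R R)) f := by
  have hI : (I • ⊤ : Submodule R R) = I := by rw [Ideal.smul_eq_mul, Ideal.mul_top]
  rw [hI]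
  intro a b hab
  obtain ⟨x, rfl⟩ := Submodule.Quotient.mk_surjective _ a
  obtain ⟨y, rfl⟩ := Submodule.Quotient.mk_surjective _ b
  simp only at hab
  rw [← Submodule.Quotient.mk_smul, ← Submodule.Quotient.mk_smul] at hab
  rw [Submodule.Quotient.eq] at hab ⊢
  have : f • x - f • y = f * (x - y) := by simp [smul_eq_mul, mul_sub]
  rw [this] at hab
  exact h _ hab


/-- The generators `x_{i,i+1} y_{(i+1)/2} − x_{i+1,i+2} y_{(i+3)/2}` (for odd
`i = 2j+1`, `0 ≤ j ≤ r−1`, one-based) of the defining ideal of the Rees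
algebra of the Pfaffian ideal of the tridiagonal skew-symmetric matrix, in
`S = K[x_{12}, …, x_{n−1,n}, y_1, …, y_{r+1}]` with `n = 2r+1`.  The `x`
variables are indexed by `Fin (2r)` (zero-based) and the `y` variables by
`Fin (r+1)`. -/
noncomputable def reesGen (r : ℕ) (K : Type*) [Field K] (j : Fin r) :
    MvPolynomial (Fin (2 * r) ⊕ Fin (r + 1)) K :=
  X (Sum.inl ⟨2 * j.val, by have := j.isLt; omega⟩) * X (Sum.inr j.castSucc) -
    X (Sum.inl ⟨2 * j.val + 1, by have := j.isLt; omega⟩) * X (Sum.inr j.succ)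

lemma reesStep (r : ℕ) (K : Type*) [Field K] (i : ℕ) (hi : i < r)
    (g : MvPolynomial (Fin (2 * r) ⊕ Fin (r + 1)) K)
    (h : reesGen r K ⟨i, hi⟩ * g ∈
      Ideal.span {x | ∃ j : Fin r, j.val < i ∧ x = reesGen r K j}) :
    g ∈ Ideal.span {x | ∃ j : Fin r, j.val < i ∧ x = reesGen r K j} := by
  classical
  set σ := (Fin (2 * r) ⊕ Fin (r + 1)) with hσ
  set v1 : σ := Sum.inl ⟨2 * i + 1, by omega⟩ with hv1
  set v2 : σ := Sum.inr ⟨i + 1, by omega⟩ with hv2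
  have hne : v1 ≠ v2 := by simp [hv1, hv2]
  set τ := {w : σ // w ≠ v1 ∧ w ≠ v2} with hτ
  set E := remove2 v1 v2 hne with hE
  set Φ := (renameEquiv K E).toRingEquiv with hΦ
  set s0 : Set (MvPolynomial σ K) := {x | ∃ j : Fin r, j.val < i ∧ x = reesGen r K j} with hs0
  have key : ∀ j : Fin r, j.val < i → ∃ p : MvPolynomial τ K,
      Φ (reesGen r K j) = rename some (rename some p) := by
    intro j hj
    have d1 : Sum.inl (⟨2 * j.val, by omega⟩ : Fin (2 * r)) ≠ v1 := by
      simp only [hv1]; intro hh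
      rw [Sum.inl.injEq, Fin.mk.injEq] at hh; omega
    have d2 : Sum.inl (⟨2 * j.val, by omega⟩ : Fin (2 * r)) ≠ v2 := by simp [hv2]
    have d3 : (Sum.inr j.castSucc : σ) ≠ v1 := by simp [hv1]
    have d4 : (Sum.inr j.castSucc : σ) ≠ v2 := by
      simp only [hv2]; intro hh
      rw [Sum.inr.injEq, Fin.ext_iff] at hh; simp at hh; omega
    have d5 : Sum.inl (⟨2 * j.val + 1, by omega⟩ : Fin (2 * r)) ≠ v1 := by
      simp only [hv1]; intro hh
      rw [Sum.inl.injEq, Fin.mk.injEq] at hh; omega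
    have d6 : Sum.inl (⟨2 * j.val + 1, by omega⟩ : Fin (2 * r)) ≠ v2 := by simp [hv2]
    have d7 : (Sum.inr j.succ : σ) ≠ v1 := by simp [hv1]
    have d8 : (Sum.inr j.succ : σ) ≠ v2 := by
      simp only [hv2]; intro hh
      rw [Sum.inr.injEq, Fin.ext_iff] at hh; simp at hh; omega
    refine ⟨X ⟨_, d1, d2⟩ * X ⟨_, d3, d4⟩ - X ⟨_, d5, d6⟩ * X ⟨_, d7, d8⟩, ?_⟩
    simp only [hΦ, reesGen, AlgEquiv.toRingEquiv_eq_coe, AlgEquiv.coe_ringEquiv,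
      renameEquiv_apply, map_sub, map_mul, rename_X]
    rw [remove2_other v1 v2 hne _ d1 d2, remove2_other v1 v2 hne _ d3 d4,
      remove2_other v1 v2 hne _ d5 d6, remove2_other v1 v2 hne _ d7 d8]
  set s : Set (MvPolynomial τ K) :=
    {p | rename some (rename some p) ∈ ⇑Φ '' s0} with hs
  have himg : ⇑(rename (some : Option τ → Option (Option τ))) ''
      (⇑(rename (some : τ → Option τ)) '' s) = ⇑Φ '' s0 := by
    apply Set.Subset.antisymm
    · rintro x ⟨q, ⟨p, hp, rfl⟩, rfl⟩
      exact hp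
    · rintro x ⟨y, hy, rfl⟩
      obtain ⟨j, hj, rfl⟩ := hy
      obtain ⟨p, hp⟩ := key j hj
      refine ⟨rename some p, ⟨p, ?_, rfl⟩, hp.symm⟩
      show rename some (rename some p) ∈ ⇑Φ '' s0
      rw [← hp]
      exact ⟨reesGen r K j, ⟨j, hj, rfl⟩, rfl⟩
  -- compute image of the i-th generator
  have da : Sum.inl (⟨2 * i, by omega⟩ : Fin (2 * r)) ≠ v1 := by
    simp only [hv1]; intro hh
    rw [Sum.inl.injEq, Fin.mk.injEq] at hh; omega
  have db : Sum.inl (⟨2 * i, by omega⟩ : Fin (2 * r)) ≠ v2 := by simp [hv2]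
  have dc : (Sum.inr (⟨i, hi⟩ : Fin r).castSucc : σ) ≠ v1 := by simp [hv1]
  have dd : (Sum.inr (⟨i, hi⟩ : Fin r).castSucc : σ) ≠ v2 := by
    simp only [hv2]; intro hh
    rw [Sum.inr.injEq, Fin.ext_iff] at hh; simp at hh
  have hfi : Φ (reesGen r K ⟨i, hi⟩) =
      rename some ((X (some ⟨_, da, db⟩) * X (some ⟨_, dc, dd⟩) : MvPolynomial (Option τ) K))
        - X none * X (some none) := by
    simp only [hΦ, reesGen, AlgEquiv.toRingEquiv_eq_coe, AlgEquiv.coe_ringEquiv,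
      renameEquiv_apply, map_sub, map_mul, rename_X]
    rw [remove2_other v1 v2 hne _ da db, remove2_other v1 v2 hne _ dc dd]
    have e1 : E (Sum.inl ⟨2 * i + 1, by omega⟩) = none := remove2_fst v1 v2 hne
    have e2 : E (Sum.inr ((⟨i, hi⟩ : Fin r).succ)) = some none := by
      have : (Sum.inr ((⟨i, hi⟩ : Fin r).succ) : σ) = v2 := by
        simp [hv2, Fin.ext_iff]
      rw [this]; exact remove2_snd v1 v2 hne
    rw [e1, e2]
  rw [mem_span_image_iff' Φ, ← himg] at h ⊢
  rw [map_mul, hfi] at h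
  exact lemMaster _ _ _ h


/-- the `r` generators
`x_{i,i+1} y_{(i+1)/2} − x_{i+1,i+2} y_{(i+3)/2}` (`i` odd, `1 ≤ i ≤ 2r−1`)
of the defining ideal `J` of the Rees algebra form a regular sequence in
`S`; in particular `J` is a complete intersection of quadrics. -/
theorem reesGen_isRegular (r : ℕ) (K : Type*) [Field K] :
    RingTheory.Sequence.IsRegular (MvPolynomial (Fin (2 * r) ⊕ Fin (r + 1)) K)
      (List.ofFn (reesGen r K)) ∧
    ∀ j : Fin r, (reesGen r K j).IsHomogeneous 2 := by
  constructor
  · refine ⟨⟨?_⟩, ?_⟩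
    · intro i hlen
      have hi : i < r := by simpa using hlen
      have hset : Ideal.ofList ((List.ofFn (reesGen r K)).take i) =
          Ideal.span {x | ∃ j : Fin r, j.val < i ∧ x = reesGen r K j} := by
        unfold Ideal.ofList
        congr 1
        ext x
        simp only [Set.mem_setOf_eq, List.mem_take_iff_getElem, List.getElem_ofFn,
          List.length_ofFn]
        constructor
        · rintro ⟨m, hm, rfl⟩
          rw [lt_min_iff] at hm
          exact ⟨⟨m, hm.2⟩, hm.1, rfl⟩
        · rintro ⟨j, hj, rfl⟩
          exact ⟨j.val, lt_min_iff.mpr ⟨hj, j.isLt⟩, by simp⟩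
      have hget : (List.ofFn (reesGen r K))[i] = reesGen r K ⟨i, hi⟩ := by
        simp [List.getElem_ofFn]
      rw [hget, hset]
      exact isSMulRegular_quot _ _ (fun g hg => reesStep r K i hi g hg)
    · intro heq
      have hsm : (Ideal.ofList (List.ofFn (reesGen r K)) •
          (⊤ : Submodule (MvPolynomial (Fin (2 * r) ⊕ Fin (r + 1)) K) _)) =
          Ideal.ofList (List.ofFn (reesGen r K)) := by
        rw [Ideal.smul_eq_mul, Ideal.mul_top]
      rw [hsm] at heq
      have h1 : (1 : MvPolynomial (Fin (2 * r) ⊕ Fin (r + 1)) K) ∈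
          Ideal.ofList (List.ofFn (reesGen r K)) := by
        rw [← heq]; trivial
      have hle : Ideal.ofList (List.ofFn (reesGen r K)) ≤
          RingHom.ker (constantCoeff :
            MvPolynomial (Fin (2 * r) ⊕ Fin (r + 1)) K →+* K) := by
        rw [Ideal.span_le]
        rintro x hx
        rw [Set.mem_setOf_eq, List.mem_ofFn] at hx
        obtain ⟨j, rfl⟩ := hx
        simp [RingHom.mem_ker, reesGen]
      have := hle h1
      rw [RingHom.mem_ker, map_one] at this
      exact one_ne_zero this
  · intro j
    exact ((isHomogeneous_X K _).mul (isHomogeneous_X K _)).sub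
      ((isHomogeneous_X K _).mul (isHomogeneous_X K _))
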